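/- arXiv:2209.03058 — 4 statements merged into one kernel-verified Lean document; each statement's English description precedes it below -/
import Mathlib

section
/- There exist a real constant c > 0 and N₀ such that every integer N ≥ N₀ can be represented as N = n₁ + n₂ with positive integers n₁, n₂ satisfying F(nᵢ) ≥ c·log N for i = 1, 2. -/
/-!
Every `n < N` with `F n ≤ k` lies within `k` of a prime `p ≤ N + k`, so there are at most
`(2k + 1) π(N + k)` of them. By Chebyshev's bound `π(x) = O(x / log x)`, taking `k ≈ log N / 100`
makes this fewer than `(N - 1) / 2`, and then some `n ∈ (0, N)` has neither `n` nor `N - n`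
within `k` of a prime.
-/

/-- `F n` is the distance from `n` to the nearest prime number. -/
noncomputable def F (n : ℕ) : ℕ :=
  sInf {d : ℕ | ∃ p : ℕ, p.Prime ∧ ((n : ℤ) - (p : ℤ)).natAbs = d}

open Finset Real
open scoped Nat.Prime

lemma exists_prime_natAbs_sub_eq_F (n : ℕ) :
    ∃ p : ℕ, p.Prime ∧ ((n : ℤ) - p).natAbs = F n :=
  Nat.sInf_mem (s := {d : ℕ | ∃ p : ℕ, p.Prime ∧ ((n : ℤ) - p).natAbs = d})
    ⟨_, 2, Nat.prime_two, rfl⟩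

lemma exists_prime_le_add_of_F_le {n k : ℕ} (h : F n ≤ k) :
    ∃ p ∈ Nat.primesLE (n + k), n ∈ Icc (p - k) (p + k) := by
  obtain ⟨p, hp, hnp⟩ := exists_prime_natAbs_sub_eq_F n
  exact ⟨p, Nat.mem_primesLE.mpr ⟨by omega, hp⟩, mem_Icc.mpr ⟨by omega, by omega⟩⟩

lemma card_filter_F_le_le (M k : ℕ) :
    #{n ∈ range M | F n ≤ k} ≤ π (M + k) * (2 * k + 1) := by
  have hsub : {n ∈ range M | F n ≤ k} ⊆
      (Nat.primesLE (M + k)).biUnion fun p ↦ Icc (p - k) (p + k) := by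
    intro n hn
    obtain ⟨hnM, hFn⟩ := mem_filter.mp hn
    obtain ⟨p, hp, hnp⟩ := exists_prime_le_add_of_F_le hFn
    have hpM : p ≤ M + k := (Nat.le_of_mem_primesLE hp).trans (by have := mem_range.mp hnM; omega)
    exact mem_biUnion.mpr ⟨p, Nat.mem_primesLE.mpr ⟨hpM, Nat.prime_of_mem_primesLE hp⟩, hnp⟩
  calc #{n ∈ range M | F n ≤ k}
      ≤ ∑ p ∈ Nat.primesLE (M + k), #(Icc (p - k) (p + k)) :=
        (card_le_card hsub).trans card_biUnion_le
    _ ≤ ∑ _p ∈ Nat.primesLE (M + k), (2 * k + 1) :=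
        sum_le_sum fun p _ ↦ by rw [Nat.card_Icc]; omega
    _ = π (M + k) * (2 * k + 1) := by
        rw [sum_const, smul_eq_mul, Nat.primesLE_card_eq_primeCounting]

lemma exists_add_eq_of_two_mul_card_filter_lt (P : ℕ → Prop) [DecidablePred P] {N : ℕ}
    (h : 2 * #{n ∈ range N | P n} + 1 < N) :
    ∃ n₁ n₂ : ℕ, 0 < n₁ ∧ 0 < n₂ ∧ N = n₁ + n₂ ∧ ¬P n₁ ∧ ¬P n₂ := by
  set S := {n ∈ range N | P n}
  by_contra! hall
  have hcover : Ioo 0 N ⊆ S ∪ S.image (N - ·) := by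
    intro n hn
    obtain ⟨hn0, hnN⟩ := mem_Ioo.mp hn
    by_cases hPn : P n
    · exact mem_union_left _ (mem_filter.mpr ⟨mem_range.mpr hnN, hPn⟩)
    · have hP' : P (N - n) := hall n (N - n) hn0 (by omega) (by omega) hPn
      exact mem_union_right _
        (mem_image.mpr ⟨N - n, mem_filter.mpr ⟨mem_range.mpr (by omega), hP'⟩, by omega⟩)
  have := (card_le_card hcover).trans ((card_union_le _ _).trans (add_le_add_right card_image_le _))
  simp only [Nat.card_Ioo] at this
  omega

lemma primeCounting_two_mul_le {N : ℕ} (hN : 1 < N) :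
    (π (2 * N) : ℝ) ≤ 6 * N / log N + 2 * √N := by
  have hN' : (1 : ℝ) < N := by exact_mod_cast hN
  have hpi := Chebyshev.pi_le_log4_mul_div (x := 2 * N) (by linarith)
  have hfloor : ⌊(2 * N : ℝ)⌋₊ = 2 * N := by exact_mod_cast Nat.floor_natCast (2 * N)
  rw [hfloor] at hpi
  have hlogN : 0 < log N := log_pos hN'
  have hlog_sqrt : log N / 2 ≤ log √(2 * N) := by
    rw [log_sqrt (by positivity)]
    gcongr
    linarith
  have hlog4 : log 4 < 3 / 2 := by
    rw [show (4 : ℝ) = 2 ^ 2 by norm_num, log_pow]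
    have := log_two_lt_d9
    norm_num at this ⊢
    linarith
  have hsqrt : √(2 * N) ≤ 2 * √N := by
    rw [sqrt_mul zero_le_two]
    gcongr
    rw [sqrt_le_left (by norm_num)]
    norm_num
  calc (π (2 * N) : ℝ) ≤ log 4 * (2 * N) / log √(2 * N) + √(2 * N) := by exact_mod_cast hpi
    _ ≤ (3 / 2) * (2 * N) / (log N / 2) + 2 * √N := by
        gcongr
    _ = 6 * N / log N + 2 * √N := by ring

lemma two_mul_primeCounting_mul_add_one_lt {N k : ℕ} (hL : 100 ≤ log N)
    (hk : (k : ℝ) ≤ log N / 100) :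
    2 * (π (N + k) * (2 * k + 1)) + 1 < N := by
  set L := log N
  set x := √N
  have hN : (1 : ℝ) < N := by
    by_contra! h
    linarith [log_nonpos (Nat.cast_nonneg N) h]
  have hx : x ^ 2 = N := sq_sqrt (Nat.cast_nonneg N)
  have hLx : L ≤ 2 * x := by
    have := log_le_sub_one_of_pos (sqrt_pos.mpr (by linarith : (0 : ℝ) < N))
    rw [log_sqrt (Nat.cast_nonneg N)] at this
    linarith
  have hkN : k ≤ N := by
    have := log_le_sub_one_of_pos (by linarith : (0 : ℝ) < N)
    exact_mod_cast (show (k : ℝ) ≤ N by linarith)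
  have hP : (π (N + k) : ℝ) ≤ 6 * N / L + 2 * x := by
    refine le_trans ?_ (primeCounting_two_mul_le (by exact_mod_cast hN))
    exact_mod_cast Nat.monotone_primeCounting (by omega)
  have hK : (2 * k + 1 : ℝ) ≤ L / 50 + 1 := by linarith
  rw [← Nat.cast_lt (α := ℝ)]
  push_cast
  calc 2 * (π (N + k) * (2 * k + 1) : ℝ) + 1
      ≤ 2 * ((6 * N / L + 2 * x) * (L / 50 + 1)) + 1 := by gcongr
    _ = 12 * N / 50 + 12 * N / L + 4 * x * L / 50 + 4 * x + 1 := by field_simp; ring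
    _ ≤ 12 * N / 50 + 12 * N / 100 + 8 * N / 50 + 4 * N / 50 + N / 2500 := by
        have hx50 : 50 ≤ x := by linarith
        have h₁ : 12 * N / L ≤ 12 * N / 100 := by gcongr
        have h₂ : 4 * x * L / 50 ≤ 8 * N / 50 := by nlinarith
        have h₃ : 4 * x ≤ 4 * N / 50 := by nlinarith
        have h₄ : 1 ≤ (N : ℝ) / 2500 := by nlinarith
        linarith
    _ < N := by linarith

/-- There are `c > 0` and `N₀` such that every integer `N ≥ N₀` is a sum `N = n₁ + n₂`
of positive integers with `F nᵢ ≥ c · log N` for `i = 1, 2`. -/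
theorem prime_avoiding_basis_order_two_trivial :
    ∃ c : ℝ, 0 < c ∧ ∃ N₀ : ℕ, ∀ N : ℕ, N₀ ≤ N →
      ∃ n₁ n₂ : ℕ, 0 < n₁ ∧ 0 < n₂ ∧ N = n₁ + n₂ ∧
        (F n₁ : ℝ) ≥ c * Real.log N ∧ (F n₂ : ℝ) ≥ c * Real.log N := by
  refine ⟨1 / 100, by norm_num, ⌈exp 100⌉₊, fun N hN ↦ ?_⟩
  have hexp : exp 100 ≤ N := Nat.ceil_le.mp hN
  have hL : 100 ≤ log N := (le_log_iff_exp_le ((exp_pos 100).trans_le hexp)).mpr hexp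
  set k := ⌊log N / 100⌋₊
  have hF : ∀ n, ¬F n ≤ k → (F n : ℝ) ≥ 1 / 100 * log N := fun n hn ↦ by
    have := Nat.lt_floor_add_one (log N / 100)
    have : (k : ℝ) + 1 ≤ F n := by exact_mod_cast Nat.lt_of_not_le hn
    linarith
  have hcard : 2 * #{n ∈ range N | F n ≤ k} + 1 < N :=
    lt_of_le_of_lt (by gcongr; exact card_filter_F_le_le N k)
      (two_mul_primeCounting_mul_add_one_lt hL (Nat.floor_le (by positivity)))
  obtain ⟨n₁, n₂, h₁, h₂, hsum, hn₁, hn₂⟩ :=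
    exists_add_eq_of_two_mul_card_filter_lt (fun n ↦ F n ≤ k) hcard
  exact ⟨n₁, n₂, h₁, h₂, hsum, hF n₁ hn₁, hF n₂ hn₂⟩
end

section
/- Let z < x be reals with z ≥ 1, let T be the set of primes q with z < q ≤ x, and let A be a finite set of integers with |A| ≤ |T|. Then there exists an integer b such that A ∩ (S_{z,x} − b) = ∅; that is, for every a ∈ A there is a prime q with z < q ≤ x dividing a + b. -/
open Finset
open scoped Classical

noncomputable section

/-- The finset of primes `p ≤ u`. -/
def primesLE (u : ℝ) : Finset ℕ :=
  (Finset.range (Nat.floor u + 1)).filter fun p => p.Prime ∧ (p : ℝ) ≤ u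

/-- The finset of primes `u < p ≤ v`. -/
def primesIn (u v : ℝ) : Finset ℕ :=
  (primesLE v).filter fun p => u < (p : ℝ)

/-- `P(u) = ∏_{p ≤ u} p`. -/
def Pprod (u : ℝ) : ℕ := ∏ p ∈ primesLE u, p

/-- `σ(u) = ∏_{p ≤ u} (1 - 1/p)`. -/
def sigmaLE (u : ℝ) : ℝ := ∏ p ∈ primesLE u, (1 - 1 / (p : ℝ))

/-- `S_u`: the set of integers not divisible by any prime `p ≤ u`. -/
def Sset (u : ℝ) : Set ℤ := {n : ℤ | ∀ p ∈ primesLE u, ¬((p : ℤ) ∣ n)}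

/-- `S_{u,v}`: the set of integers not divisible by any prime `u < p ≤ v`. -/
def SsetIn (u v : ℝ) : Set ℤ := {n : ℤ | ∀ p ∈ primesIn u v, ¬((p : ℤ) ∣ n)}

lemma sieve_out_aux (A : Finset ℤ) : ∀ T : Finset ℕ, (∀ q ∈ T, q.Prime) →
    A.card ≤ T.card → ∃ b : ℤ, ∀ a ∈ A, ∃ q ∈ T, (q : ℤ) ∣ a + b := by
  induction A using Finset.induction_on with
  | empty => exact fun T _ _ => ⟨0, by simp⟩
  | @insert a s ha ih =>
    intro T hTp hcard
    have hTne : T.Nonempty := by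
      rw [← Finset.card_pos]
      calc 0 < (insert a s).card := by simp [Finset.card_insert_of_notMem ha]
        _ ≤ T.card := hcard
    obtain ⟨q, hq⟩ := hTne
    have hscard : s.card ≤ (T.erase q).card := by
      rw [Finset.card_erase_of_mem hq]
      have := Finset.card_insert_of_notMem ha ▸ hcard
      omega
    obtain ⟨b, hb⟩ := ih (T.erase q) (fun q' hq' => hTp q' (Finset.mem_of_mem_erase hq')) hscard
    set M : ℤ := ∏ q' ∈ T.erase q, (q' : ℤ) with hM
    have hcop : IsCoprime (q : ℤ) M := by
      apply IsCoprime.prod_right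
      intro q' hq'
      have h1 := hTp q hq
      have h2 := hTp q' (Finset.mem_of_mem_erase hq')
      have hne : q ≠ q' := (Finset.ne_of_mem_erase hq').symm
      have : Nat.Coprime q q' := (Nat.coprime_primes h1 h2).mpr hne
      exact Nat.isCoprime_iff_coprime.mpr this
    obtain ⟨u, v, huv⟩ := hcop
    refine ⟨b * (u * q) - a * (v * M), ?_⟩
    intro a' ha'
    rcases Finset.mem_insert.mp ha' with rfl | ha's
    · refine ⟨q, hq, ?_⟩
      have : a' + (b * (u * q) - a' * (v * M)) = (a' + b) * u * q := by
        have h1 : v * M = 1 - u * q := by linarith [huv]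
        rw [h1]; ring
      rw [this]
      exact ⟨(a' + b) * u, by ring⟩
    · obtain ⟨q', hq', hdvd⟩ := hb a' ha's
      refine ⟨q', Finset.mem_of_mem_erase hq', ?_⟩
      have hqM : (q' : ℤ) ∣ M := Finset.dvd_prod_of_mem _ hq'
      have : a' + (b * (u * q) - a * (v * M)) = (a' + b) - (a + b) * (v * M) := by
        have h1 : u * q = 1 - v * M := by linarith [huv]
        rw [h1]; ring
      rw [this]
      exact dvd_sub hdvd (Dvd.dvd.mul_left (hqM.mul_left v) _)

/-- If `A` is a finite set of integers of size at most the number of primes in `(z, x]`,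
then there is an integer `b` with `A ∩ (S_{z,x} - b) = ∅`: every `a ∈ A` has `a + b`
divisible by some prime `q` with `z < q ≤ x`. -/
theorem sieve_out_with_primes (z x : ℝ) (hz : 1 ≤ z) (hzx : z < x) (A : Finset ℤ)
    (hA : A.card ≤ (primesIn z x).card) :
    ∃ b : ℤ, ∀ a ∈ A, ∃ q ∈ primesIn z x, (q : ℤ) ∣ a + b := by
  exact sieve_out_aux A _ (fun q hq => ((Finset.mem_filter.mp (Finset.mem_filter.mp hq |>.1)).2.1)) hA
end
end

section
/- There exists x₀ such that for every real x ≥ x₀ and every integer N the following holds: with y = ⌊0.08·x⌋ and P(x) = ∏_{p ≤ x} p, there is a residue b modulo P(x) such that (S_x − b) ∩ [−y, y] = ∅ and (S_x − N + b) ∩ [−y, y] = ∅. -/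
open Finset
open scoped Classical

noncomputable section

lemma mem_primesLE {u : ℝ} {p : ℕ} : p ∈ primesLE u ↔ p.Prime ∧ (p : ℝ) ≤ u := by
  constructor
  · rintro h
    simp only [primesLE, Finset.mem_filter] at h
    exact h.2
  · rintro ⟨h1, h2⟩
    simp only [primesLE, Finset.mem_filter, Finset.mem_range, Nat.lt_succ_iff]
    exact ⟨Nat.le_floor h2, h1, h2⟩

/-- the target residue of a "task" `r` (side `r.2`, position `r.1`). -/
def resid (N : ℤ) (r : ℤ × Bool) : ℤ := if r.2 then r.1 + N else -r.1

def covered (N : ℤ) (t : ℕ → ℤ) (p : ℕ) (r : ℤ × Bool) : Prop :=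
  (p : ℤ) ∣ resid N r - t p

lemma greedy (N : ℤ) (s : Finset ℕ) (hs : ∀ p ∈ s, p.Prime) (R : Finset (ℤ × Bool)) :
    ∃ t : ℕ → ℤ, (((R.filter fun r => ∀ p ∈ s, ¬ covered N t p r).card : ℝ)
      ≤ R.card * ∏ p ∈ s, (1 - 1/(p:ℝ)) + s.card) := by
  induction s using Finset.induction_on generalizing R with
  | empty =>
      refine ⟨fun _ => 0, ?_⟩
      simp
  | insert a s ha ih =>
      have hap : a.Prime := hs a (mem_insert_self a s)
      have hsp : ∀ p ∈ s, p.Prime := fun p hp => hs p (mem_insert_of_mem hp)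
      haveI : Fact a.Prime := ⟨hap⟩
      haveI : NeZero a := ⟨hap.pos.ne'⟩
      -- pigeonhole
      set f : ℤ × Bool → ZMod a := fun r => ((resid N r : ℤ) : ZMod a) with hf
      have hcard : (univ : Finset (ZMod a)).card * (R.card / a) ≤ R.card := by
        rw [card_univ, ZMod.card a]
        exact Nat.mul_div_le _ _
      obtain ⟨v, -, hv⟩ := exists_le_card_fiber_of_mul_le_card_of_maps_to
        (fun r (_ : r ∈ R) => mem_univ (f r)) univ_nonempty hcard
      set Fib := R.filter fun r => f r = v with hFib
      set R' := R.filter fun r => ¬ (f r = v) with hR'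
      have hsplit : Fib.card + R'.card = R.card := card_filter_add_card_filter_not _
      obtain ⟨t', ht'⟩ := ih hsp R'
      refine ⟨fun q => if q = a then (v.val : ℤ) else t' q, ?_⟩
      set t : ℕ → ℤ := fun q => if q = a then (v.val : ℤ) else t' q with htdef
      -- the uncovered set is contained in the IH uncovered set
      have hsub : (R.filter fun r => ∀ p ∈ insert a s, ¬ covered N t p r) ⊆
          (R'.filter fun r => ∀ p ∈ s, ¬ covered N t' p r) := by
        intro r hr
        rw [mem_filter] at hr
        obtain ⟨hrR, hall⟩ := hr
        have hna : ¬ covered N t a r := hall a (mem_insert_self a s)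
        have hfr : ¬ (f r = v) := by
          intro hfv
          apply hna
          unfold covered
          have : t a = (v.val : ℤ) := by simp [htdef]
          rw [this]
          rw [← ZMod.intCast_zmod_eq_zero_iff_dvd]
          push_cast
          rw [ZMod.natCast_val, ZMod.cast_id]
          rw [hf] at hfv
          rw [← hfv]
          ring
        rw [mem_filter]
        refine ⟨mem_filter.mpr ⟨hrR, hfr⟩, ?_⟩
        intro p hp
        have hpa : p ≠ a := by rintro rfl; exact ha hp
        have heq : t p = t' p := by simp [htdef, hpa]
        intro hc
        apply hall p (mem_insert_of_mem hp)
        unfold covered at hc ⊢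
        rw [heq]
        exact hc
      have hcard2 : ((R.filter fun r => ∀ p ∈ insert a s, ¬ covered N t p r).card : ℝ)
          ≤ ((R'.filter fun r => ∀ p ∈ s, ¬ covered N t' p r).card : ℝ) := by
        exact_mod_cast card_le_card hsub
      have hprod_nonneg : (0:ℝ) ≤ ∏ p ∈ s, (1 - 1/(p:ℝ)) := by
        apply prod_nonneg
        intro p hp
        have h2 : (2:ℝ) ≤ (p:ℝ) := by exact_mod_cast (hsp p hp).two_le
        have : 1/(p:ℝ) ≤ 1/2 := by
          apply one_div_le_one_div_of_le <;> linarith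
        linarith
      have hprod_le_one : ∏ p ∈ s, (1 - 1/(p:ℝ)) ≤ 1 := by
        apply prod_le_one
        · intro p hp
          have h2 : (2:ℝ) ≤ (p:ℝ) := by exact_mod_cast (hsp p hp).two_le
          have : 1/(p:ℝ) ≤ 1/2 := by
            apply one_div_le_one_div_of_le <;> linarith
          linarith
        · intro p hp
          have h0 : (0:ℝ) < (p:ℝ) := by exact_mod_cast (hsp p hp).pos
          have : 0 < 1/(p:ℝ) := by positivity
          linarith
      -- R'.card bound
      have hq : (R.card / a : ℕ) ≤ Fib.card := hv
      have hR'le : (R'.card : ℝ) ≤ (R.card : ℝ) * (1 - 1/(a:ℝ)) + 1 := by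
        have h1 : (R'.card : ℝ) = (R.card : ℝ) - Fib.card := by
          have := hsplit
          push_cast [← this]
          ring
        have h2 : ((R.card / a : ℕ) : ℝ) ≤ (Fib.card : ℝ) := by exact_mod_cast hq
        have h3 : (R.card : ℝ) / a - 1 ≤ ((R.card / a : ℕ) : ℝ) := by
          have hmod := Nat.div_add_mod R.card a
          have hmlt : (R.card % a : ℕ) < a := Nat.mod_lt _ hap.pos
          have ha0 : (0:ℝ) < (a:ℝ) := by exact_mod_cast hap.pos
          have hcast : (R.card : ℝ) = (a:ℝ) * ((R.card / a : ℕ) : ℝ) + ((R.card % a : ℕ) : ℝ) := by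
            exact_mod_cast hmod.symm
          have hma : ((R.card % a : ℕ) : ℝ) < (a:ℝ) := by exact_mod_cast hmlt
          rw [hcast, add_div, mul_div_cancel_left₀ _ ha0.ne']
          have : ((R.card % a : ℕ):ℝ)/(a:ℝ) ≤ 1 := by
            rw [div_le_one ha0]; linarith
          linarith
        have ha0 : (0:ℝ) < (a:ℝ) := by exact_mod_cast hap.pos
        have expand : (R.card : ℝ) * (1 - 1/(a:ℝ)) = (R.card : ℝ) - (R.card:ℝ)/a := by
          field_simp
        rw [expand, h1]
        linarith
      calc ((R.filter fun r => ∀ p ∈ insert a s, ¬ covered N t p r).card : ℝ)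
          ≤ ((R'.filter fun r => ∀ p ∈ s, ¬ covered N t' p r).card : ℝ) := hcard2
        _ ≤ R'.card * ∏ p ∈ s, (1 - 1/(p:ℝ)) + s.card := ht'
        _ ≤ ((R.card : ℝ) * (1 - 1/(a:ℝ)) + 1) * ∏ p ∈ s, (1 - 1/(p:ℝ)) + s.card := by
            apply (add_le_add_iff_right _).mpr
            apply mul_le_mul_of_nonneg_right hR'le hprod_nonneg
        _ ≤ (R.card : ℝ) * ∏ p ∈ insert a s, (1 - 1/(p:ℝ)) + (insert a s).card := by
            rw [prod_insert ha, card_insert_of_notMem ha]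
            push_cast
            have e : ((R.card:ℝ)*(1-1/(a:ℝ))+1) * (∏ p ∈ s, (1 - 1/(p:ℝ)))
                = (R.card:ℝ)*((1-1/(a:ℝ)) * ∏ p ∈ s, (1 - 1/(p:ℝ)))
                  + ∏ p ∈ s, (1 - 1/(p:ℝ)) := by ring
            linarith

lemma exists_good_t (N : ℤ) (R : Finset (ℤ × Bool)) (s L : Finset ℕ)
    (hs : ∀ p ∈ s, p.Prime) (hdisj : Disjoint s L)
    (hcard : (R.card : ℝ) * ∏ p ∈ s, (1 - 1/(p:ℝ)) + s.card ≤ L.card) :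
    ∃ t : ℕ → ℤ, ∀ r ∈ R, ∃ p ∈ s ∪ L, (p : ℤ) ∣ resid N r - t p := by
  obtain ⟨t₁, ht₁⟩ := greedy N s hs R
  set U := R.filter fun r => ∀ p ∈ s, ¬ covered N t₁ p r with hU
  have hUcard : U.card ≤ L.card := by
    have : (U.card : ℝ) ≤ (L.card : ℝ) := le_trans ht₁ hcard
    exact_mod_cast this
  obtain ⟨L', hL'sub, hL'card⟩ := Finset.exists_subset_card_eq hUcard
  have hcards : U.card = L'.card := hL'card.symm
  set e := Finset.equivOfCardEq hcards with he
  refine ⟨fun p => if h : ∃ u : {x // x ∈ U}, ((e u : {x // x ∈ L'}) : ℕ) = p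
      then resid N (h.choose : ℤ × Bool) else t₁ p, ?_⟩
  intro r hr
  by_cases hru : r ∈ U
  · -- cleanup prime
    set u : {x // x ∈ U} := ⟨r, hru⟩ with hu
    set p : ℕ := ((e u : {x // x ∈ L'}) : ℕ) with hp
    have hpL : p ∈ L := hL'sub (e u).2
    refine ⟨p, mem_union_right _ hpL, ?_⟩
    have hex : ∃ u' : {x // x ∈ U}, ((e u' : {x // x ∈ L'}) : ℕ) = p := ⟨u, rfl⟩
    have hchoose : hex.choose = u := by
      have h1 : ((e hex.choose : {x // x ∈ L'}) : ℕ) = ((e u : {x // x ∈ L'}) : ℕ) :=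
        hex.choose_spec
      have h2 : (e hex.choose) = (e u) := Subtype.ext h1
      exact e.injective h2
    simp only [dif_pos hex]
    rw [hchoose]
    simp [hu]
  · -- covered by a small prime
    have : ¬ (∀ p ∈ s, ¬ covered N t₁ p r) := by
      intro hall
      exact hru (mem_filter.mpr ⟨hr, hall⟩)
    push_neg at this
    obtain ⟨p, hps, hdvd⟩ := this
    refine ⟨p, mem_union_left _ hps, ?_⟩
    have hnoex : ¬ ∃ u : {x // x ∈ U}, ((e u : {x // x ∈ L'}) : ℕ) = p := by
      rintro ⟨u', hu'⟩
      have : p ∈ L := hL'sub (hu' ▸ (e u').2)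
      exact (Finset.disjoint_left.mp hdisj hps) this
    simp only [dif_neg hnoex]
    exact hdvd

lemma crt_aux (s : Finset ℕ) (hs : ∀ p ∈ s, p.Prime) (t : ℕ → ℤ) :
    ∃ b : ℤ, ∀ p ∈ s, (p : ℤ) ∣ b - t p := by
  induction s using Finset.induction_on with
  | empty => exact ⟨0, fun p hp => absurd hp (notMem_empty p)⟩
  | insert a s ha ih =>
      have hap : a.Prime := hs a (mem_insert_self a s)
      have hsp : ∀ p ∈ s, p.Prime := fun p hp => hs p (mem_insert_of_mem hp)
      obtain ⟨b₀, hb₀⟩ := ih hsp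
      haveI : Fact a.Prime := ⟨hap⟩
      set M : ℕ := ∏ p ∈ s, p with hM
      have hMne : (M : ZMod a) ≠ 0 := by
        intro h0
        rw [ZMod.natCast_eq_zero_iff] at h0
        have hdvd := h0
        obtain ⟨p, hps, hpd⟩ := (Nat.Prime.prime hap).exists_mem_finset_dvd hdvd
        have := ((Nat.prime_dvd_prime_iff_eq hap (hsp p hps)).mp hpd)
        exact ha (this ▸ hps)
      set κ : ZMod a := ((t a - b₀ : ℤ) : ZMod a) * (M : ZMod a)⁻¹ with hκ
      refine ⟨b₀ + (M : ℤ) * (κ.val : ℤ), ?_⟩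
      intro p hp
      rcases mem_insert.mp hp with rfl | hps
      · rw [← ZMod.intCast_zmod_eq_zero_iff_dvd]
        push_cast
        rw [ZMod.natCast_val, ZMod.cast_id]
        rw [hκ]
        field_simp
        push_cast
        ring
      · have h1 : (p : ℤ) ∣ (M : ℤ) := by
          exact_mod_cast Int.natCast_dvd_natCast.mpr (Finset.dvd_prod_of_mem _ hps)
        have h2 := hb₀ p hps
        have : b₀ + (M:ℤ) * (κ.val : ℤ) - t p = (b₀ - t p) + (M:ℤ) * (κ.val:ℤ) := by ring
        rw [this]
        exact dvd_add h2 (Dvd.dvd.mul_right h1 _)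

lemma sigma_le_one_div_log (z : ℝ) (hz : 2 ≤ z) :
    ∏ p ∈ primesLE z, (1 - 1/(p:ℝ)) ≤ 1 / Real.log z := by
  set s := primesLE z with hsdef
  set m := Nat.floor z with hm
  have hz0 : (0:ℝ) ≤ z := by linarith
  -- each prime is ≥ 2
  have htwo : ∀ p ∈ s, 2 ≤ p := fun p hp => (mem_primesLE.mp hp).1.two_le
  have hfac_pos : ∀ p ∈ s, (0:ℝ) < 1 - 1/(p:ℝ) := by
    intro p hp
    have h2 : (2:ℝ) ≤ (p:ℝ) := by exact_mod_cast htwo p hp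
    have : 1/(p:ℝ) ≤ 1/2 := by apply one_div_le_one_div_of_le <;> linarith
    linarith
  -- Step 1 : geometric sums
  have geom : ∀ p ∈ s, ∑ k ∈ range (m+1), (1/(p:ℝ))^k ≤ (1 - 1/(p:ℝ))⁻¹ := by
    intro p hp
    have h2 : (2:ℝ) ≤ (p:ℝ) := by exact_mod_cast htwo p hp
    have hr0 : (0:ℝ) ≤ 1/(p:ℝ) := by positivity
    have hr1 : (1/(p:ℝ)) < 1 := by
      rw [div_lt_one] <;> linarith
    have hne : (1/(p:ℝ)) ≠ 1 := ne_of_lt hr1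
    rw [geom_sum_eq hne]
    have hd : (0:ℝ) < 1 - 1/(p:ℝ) := by linarith
    have hb : 1/(p:ℝ) - 1 ≠ 0 := ne_of_lt (by linarith)
    have key : ((1/(p:ℝ))^(m+1) - 1) / (1/(p:ℝ) - 1)
        = (1 - (1/(p:ℝ))^(m+1)) / (1 - 1/(p:ℝ)) := by
      rw [div_eq_div_iff hb hd.ne']
      ring
    have hpow : (0:ℝ) ≤ (1/(p:ℝ))^(m+1) := by positivity
    rw [key, div_le_iff₀ hd, inv_mul_cancel₀ hd.ne']
    linarith
  -- Step 2 : the expansion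
  have expand : ∏ p ∈ s, ∑ k ∈ range (m+1), (1/(p:ℝ))^k
      = ∑ g ∈ s.pi (fun _ => range (m+1)), ∏ pa ∈ s.attach, (1/(pa.1:ℝ))^(g pa.1 pa.2) :=
    Finset.prod_sum _ _ _
  -- the map from integers to exponent vectors
  set F : ℕ → (∀ p ∈ s, ℕ) := fun n => (fun p _ => n.factorization p) with hF
  have hprod_eq : ∀ n ∈ Finset.Icc 1 m, ∏ p ∈ s, (p:ℕ)^(n.factorization p) = n := by
    intro n hn
    rw [Finset.mem_Icc] at hn
    have hn0 : n ≠ 0 := by omega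
    have hsup : n.primeFactors ⊆ s := by
      intro q hq
      rw [Nat.mem_primeFactors] at hq
      obtain ⟨hqp, hqd, -⟩ := hq
      have hqn : q ≤ n := Nat.le_of_dvd (by omega) hqd
      have : (q:ℝ) ≤ z := by
        have h1 : (q:ℝ) ≤ (m:ℝ) := by exact_mod_cast le_trans hqn hn.2
        have h2 : (m:ℝ) ≤ z := by
          rw [hm]; exact Nat.floor_le hz0
        linarith
      exact mem_primesLE.mpr ⟨hqp, this⟩
    have h1 : ∏ p ∈ n.primeFactors, p ^ n.factorization p = n := by
      rw [← Nat.prod_factorization_eq_prod_primeFactors]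
      exact Nat.factorization_prod_pow_eq_self hn0
    calc ∏ p ∈ s, p^(n.factorization p)
        = ∏ p ∈ n.primeFactors, p^(n.factorization p) := by
          apply (Finset.prod_subset hsup ?_).symm
          intro p _ hps
          have : n.factorization p = 0 := by
            rw [← Finsupp.notMem_support_iff, Nat.support_factorization]
            exact hps
          rw [this, pow_zero]
      _ = n := h1
  -- value of the product of the expansion term at F n
  have hval : ∀ n ∈ Finset.Icc 1 m,
      (∏ pa ∈ s.attach, (1/(pa.1:ℝ))^((F n) pa.1 pa.2)) = 1/(n:ℝ) := by
    intro n hn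
    have h1 : (∏ pa ∈ s.attach, (1/(pa.1:ℝ))^((F n) pa.1 pa.2))
        = ∏ p ∈ s, (1/(p:ℝ))^(n.factorization p) := by
      rw [← Finset.prod_attach s (fun p => (1/(p:ℝ))^(n.factorization p))]
    rw [h1]
    have h2 : ∏ p ∈ s, (1/(p:ℝ))^(n.factorization p)
        = 1 / ∏ p ∈ s, (p:ℝ)^(n.factorization p) := by
      rw [one_div, ← Finset.prod_inv_distrib]
      apply Finset.prod_congr rfl
      intro p _
      rw [one_div, inv_pow]
    rw [h2]
    congr 1
    have := hprod_eq n hn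
    exact_mod_cast congrArg (fun k : ℕ => (k:ℝ)) this
  -- F is injective on Icc 1 m
  have hinj : Set.InjOn F (Finset.Icc 1 m) := by
    intro n hn n' hn' hFe
    have h1 := hprod_eq n (by exact_mod_cast hn)
    have h2 := hprod_eq n' (by exact_mod_cast hn')
    rw [← h1, ← h2]
    apply Finset.prod_congr rfl
    intro p hp
    have h3 : (F n) p hp = (F n') p hp := by rw [hFe]
    exact congrArg (fun k => p ^ k) (by simpa [hF] using h3)
  -- F maps into the pi set
  have hmaps : ∀ n ∈ Finset.Icc 1 m, F n ∈ s.pi (fun _ => range (m+1)) := by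
    intro n hn
    rw [Finset.mem_Icc] at hn
    rw [Finset.mem_pi]
    intro p hp
    rw [Finset.mem_range]
    show n.factorization p < m + 1
    have := Nat.factorization_lt p (show n ≠ 0 by omega)
    omega
  -- harmonic sum is at most the expanded sum
  have hharm_le : ∑ n ∈ Finset.Icc 1 m, (1/(n:ℝ))
      ≤ ∑ g ∈ s.pi (fun _ => range (m+1)), ∏ pa ∈ s.attach, (1/(pa.1:ℝ))^(g pa.1 pa.2) := by
    have himage : ∑ n ∈ Finset.Icc 1 m, (1/(n:ℝ))
        = ∑ g ∈ (Finset.Icc 1 m).image F, ∏ pa ∈ s.attach, (1/(pa.1:ℝ))^(g pa.1 pa.2) := by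
      rw [Finset.sum_image (fun a ha b hb hab => hinj ha hb hab)]
      apply Finset.sum_congr rfl
      intro n hn
      exact (hval n hn).symm
    rw [himage]
    apply Finset.sum_le_sum_of_subset_of_nonneg
    · intro g hg
      rw [Finset.mem_image] at hg
      obtain ⟨n, hn, rfl⟩ := hg
      exact hmaps n hn
    · intro g _ _
      apply Finset.prod_nonneg
      intro pa _
      positivity
  -- harmonic sum is at least log z
  have hlog_le : Real.log z ≤ ∑ n ∈ Finset.Icc 1 m, (1/(n:ℝ)) := by
    have h1 := log_le_harmonic_floor z hz0
    have h2 : ((harmonic m : ℚ) : ℝ) = ∑ n ∈ Finset.Icc 1 m, (1/(n:ℝ)) := by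
      rw [harmonic_eq_sum_Icc]
      push_cast
      apply Finset.sum_congr rfl
      intro n _
      rw [one_div]
    rw [← hm] at h1
    linarith [h1, h2.le, h2.ge]
  -- combine
  have hchain : Real.log z ≤ ∏ p ∈ s, (1 - 1/(p:ℝ))⁻¹ := by
    have h3 : ∏ p ∈ s, ∑ k ∈ range (m+1), (1/(p:ℝ))^k ≤ ∏ p ∈ s, (1 - 1/(p:ℝ))⁻¹ := by
      apply Finset.prod_le_prod
      · intro p _
        apply Finset.sum_nonneg
        intro k _
        positivity
      · exact geom
    calc Real.log z ≤ ∑ n ∈ Finset.Icc 1 m, (1/(n:ℝ)) := hlog_le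
      _ ≤ ∑ g ∈ s.pi (fun _ => range (m+1)), ∏ pa ∈ s.attach, (1/(pa.1:ℝ))^(g pa.1 pa.2) :=
          hharm_le
      _ = ∏ p ∈ s, ∑ k ∈ range (m+1), (1/(p:ℝ))^k := expand.symm
      _ ≤ ∏ p ∈ s, (1 - 1/(p:ℝ))⁻¹ := h3
  have hlogpos : 0 < Real.log z := Real.log_pos (by linarith)
  have hPpos : 0 < ∏ p ∈ s, (1 - 1/(p:ℝ)) := Finset.prod_pos hfac_pos
  have hinv : ∏ p ∈ s, (1 - 1/(p:ℝ))⁻¹ = (∏ p ∈ s, (1 - 1/(p:ℝ)))⁻¹ :=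
    Finset.prod_inv_distrib _
  rw [hinv] at hchain
  rw [div_eq_inv_mul, mul_one]
  calc ∏ p ∈ s, (1 - 1/(p:ℝ)) = ((∏ p ∈ s, (1 - 1/(p:ℝ)))⁻¹)⁻¹ := by rw [inv_inv]
    _ ≤ (Real.log z)⁻¹ := by
        apply inv_anti₀ hlogpos hchain

lemma cheb (x : ℝ) (hx : 5 ≤ x) :
    ((x-2)/2) * Real.log 4 ≤ (((primesLE x).card : ℝ) + 1) * Real.log x := by
  set m := Nat.floor x with hm
  have hx0 : (0:ℝ) ≤ x := by linarith
  have hm5 : 5 ≤ m := Nat.le_floor (by exact_mod_cast hx)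
  set n := m / 2 with hn
  have hn2 : 2 ≤ n := by omega
  have h2n : 2 * n ≤ m := by omega
  have h2nge : m - 1 ≤ 2 * n := by omega
  -- central binomial bound
  set C := Nat.centralBinom n with hC
  have h4 : 4 ^ n ≤ 2 * n * C := Nat.four_pow_le_two_mul_self_mul_centralBinom n (by omega)
  have hCne : C ≠ 0 := Nat.centralBinom_ne_zero n
  -- prime factors of C are at most 2n, hence in primesLE x
  have hfac : ∀ p ∈ C.primeFactors, p ^ C.factorization p ≤ 2 * n := by
    intro p hp
    rw [hC, Nat.centralBinom]
    exact Nat.pow_factorization_choose_le (by omega)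
  have hsub : C.primeFactors ⊆ primesLE x := by
    intro p hp
    have hpp : p.Prime := Nat.prime_of_mem_primeFactors hp
    have hple : p ≤ 2 * n := by
      have h1 := hfac p hp
      have hν : 1 ≤ C.factorization p := by
        rw [← Nat.Prime.dvd_iff_one_le_factorization hpp hCne]
        exact Nat.dvd_of_mem_primeFactors hp
      calc p = p ^ 1 := (pow_one p).symm
        _ ≤ p ^ C.factorization p := Nat.pow_le_pow_right hpp.pos hν
        _ ≤ 2 * n := h1
    refine mem_primesLE.mpr ⟨hpp, ?_⟩
    have : (p:ℝ) ≤ (m:ℝ) := by exact_mod_cast le_trans hple h2n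
    have hfl : (m:ℝ) ≤ x := Nat.floor_le hx0
    linarith
  -- C ≤ (2n)^(card primesLE x)
  have hCle : C ≤ (2 * n) ^ (primesLE x).card := by
    calc C = ∏ p ∈ C.primeFactors, p ^ C.factorization p := by
          rw [← Nat.prod_factorization_eq_prod_primeFactors]
          exact (Nat.factorization_prod_pow_eq_self hCne).symm
      _ ≤ ∏ p ∈ C.primeFactors, (2 * n) := Finset.prod_le_prod' (fun p hp => hfac p hp)
      _ = (2 * n) ^ C.primeFactors.card := Finset.prod_const _
      _ ≤ (2 * n) ^ (primesLE x).card := by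
          apply Nat.pow_le_pow_right (by omega)
          exact Finset.card_le_card hsub
  -- combine in ℝ and take logs
  have hreal : (4:ℝ) ^ n ≤ (2*n : ℕ) * ((2*n : ℕ):ℝ) ^ (primesLE x).card := by
    calc (4:ℝ) ^ n = ((4 ^ n : ℕ) : ℝ) := by push_cast; ring
      _ ≤ ((2 * n * C : ℕ) : ℝ) := by exact_mod_cast h4
      _ = ((2*n : ℕ):ℝ) * (C:ℝ) := by push_cast; ring
      _ ≤ ((2*n : ℕ):ℝ) * ((2*n : ℕ):ℝ) ^ (primesLE x).card := by
          apply mul_le_mul_of_nonneg_left _ (by positivity)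
          exact_mod_cast hCle
  have h2npos : (0:ℝ) < ((2*n : ℕ):ℝ) := by
    have : 0 < 2*n := by omega
    exact_mod_cast this
  have hlog := Real.log_le_log (by positivity) hreal
  rw [Real.log_pow, Real.log_mul (by positivity) (by positivity), Real.log_pow] at hlog
  -- log (2n) ≤ log x
  have h2nx : ((2*n : ℕ):ℝ) ≤ x := by
    have : ((2*n : ℕ):ℝ) ≤ (m:ℝ) := by exact_mod_cast h2n
    have hfl : (m:ℝ) ≤ x := Nat.floor_le hx0
    linarith
  have hlog2n : Real.log ((2*n : ℕ):ℝ) ≤ Real.log x := Real.log_le_log h2npos h2nx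
  have hlog2n_pos : 0 ≤ Real.log ((2*n : ℕ):ℝ) := by
    apply Real.log_nonneg
    have : (1:ℕ) ≤ 2*n := by omega
    exact_mod_cast this
  -- n ≥ (x-2)/2
  have hnge : (x-2)/2 ≤ (n:ℝ) := by
    have h1 : (m:ℝ) ≥ x - 1 := by
      have := Nat.lt_floor_add_one x
      linarith
    have h2 : (m:ℝ) ≤ ((2*n:ℕ):ℝ) + 1 := by exact_mod_cast (show m ≤ 2*n+1 by omega)
    push_cast at h2 ⊢
    linarith
  have hlog4 : 0 ≤ Real.log 4 := Real.log_nonneg (by norm_num)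
  calc ((x-2)/2) * Real.log 4 ≤ (n:ℝ) * Real.log 4 := by
        apply mul_le_mul_of_nonneg_right hnge hlog4
    _ ≤ Real.log ((2*n : ℕ):ℝ) + ((primesLE x).card : ℝ) * Real.log ((2*n : ℕ):ℝ) := hlog
    _ ≤ Real.log x + ((primesLE x).card : ℝ) * Real.log x := by
        apply add_le_add hlog2n
        apply mul_le_mul_of_nonneg_left hlog2n (by positivity)
    _ = (((primesLE x).card : ℝ) + 1) * Real.log x := by ring

lemma card_primesLE_le (z : ℝ) (hz : 0 ≤ z) : ((primesLE z).card : ℝ) ≤ z := by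
  have hsub : primesLE z ⊆ Finset.Icc 1 (Nat.floor z) := by
    intro p hp
    rw [mem_primesLE] at hp
    rw [Finset.mem_Icc]
    exact ⟨hp.1.one_lt.le, Nat.le_floor hp.2⟩
  have h1 : (primesLE z).card ≤ Nat.floor z := by
    have := Finset.card_le_card hsub
    simpa [Nat.card_Icc] using this
  calc ((primesLE z).card : ℝ) ≤ (Nat.floor z : ℝ) := by exact_mod_cast h1
    _ ≤ z := Nat.floor_le hz

lemma card_primesIn (z x : ℝ) (hzx : z ≤ x) :
    (primesLE z).card + (primesIn z x).card = (primesLE x).card := by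
  have hsplit := Finset.card_filter_add_card_filter_not
    (s := primesLE x) (p := fun p => z < (p:ℝ))
  have heq : (primesLE x).filter (fun (p : ℕ) => ¬ z < (p:ℝ)) = primesLE z := by
    ext p
    simp only [Finset.mem_filter, mem_primesLE, not_lt]
    constructor
    · rintro ⟨⟨h1, h2⟩, h3⟩
      exact ⟨h1, h3⟩
    · rintro ⟨h1, h2⟩
      exact ⟨⟨h1, le_trans h2 hzx⟩, h2⟩
  rw [heq] at hsplit
  unfold primesIn
  omega
set_option maxHeartbeats 2000000 in
lemma main_numeric (x : ℝ) (hx : (10:ℝ)^16 ≤ x) (c : ℝ)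
    (hc : c ≤ 0.32 * x + 2) (hc0 : 0 ≤ c) :
    c * (∏ p ∈ primesLE (x ^ ((3:ℝ)/4)), (1 - 1/(p:ℝ)))
      + ((primesLE (x ^ ((3:ℝ)/4))).card : ℝ)
      ≤ ((primesIn (x ^ ((3:ℝ)/4)) x).card : ℝ) := by
  have hbig : (10:ℝ)^16 ≥ 16 := by norm_num
  have hx16 : (16:ℝ) ≤ x := by linarith
  have hx1 : (1:ℝ) ≤ x := by linarith
  have hx0 : (0:ℝ) < x := by linarith
  set z := x ^ ((3:ℝ)/4) with hzdef
  have hz0 : 0 < z := Real.rpow_pos_of_pos hx0 _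
  have hz2 : (2:ℝ) ≤ z := by
    have h1 : (16:ℝ) ^ ((3:ℝ)/4) ≤ z := Real.rpow_le_rpow (by norm_num) hx16 (by norm_num)
    have h2 : (16:ℝ) ^ ((3:ℝ)/4) = 8 := by
      have : (16:ℝ) = 2 ^ (4:ℕ) := by norm_num
      rw [this, ← Real.rpow_natCast 2 4, ← Real.rpow_mul (by norm_num)]
      norm_num
    linarith
  have hzx : z ≤ x := by
    calc z ≤ x ^ ((1:ℝ)) := Real.rpow_le_rpow_of_exponent_le hx1 (by norm_num)
      _ = x := Real.rpow_one x
  have hlogx_pos : 0 < Real.log x := Real.log_pos (by linarith)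
  have hlogz : Real.log z = (3/4) * Real.log x := Real.log_rpow hx0 _
  have hσ := sigma_le_one_div_log z hz2
  have hσ0 : (0:ℝ) ≤ ∏ p ∈ primesLE z, (1 - 1/(p:ℝ)) := by
    apply Finset.prod_nonneg
    intro p hp
    have h2 : (2:ℝ) ≤ (p:ℝ) := by exact_mod_cast (mem_primesLE.mp hp).1.two_le
    have : 1/(p:ℝ) ≤ 1/2 := by apply one_div_le_one_div_of_le <;> linarith
    linarith
  -- rpow arithmetic
  have hx18 : (100:ℝ) ≤ x ^ ((1:ℝ)/8) := by
    have h1 : ((10:ℝ)^16) ^ ((1:ℝ)/8) ≤ x ^ ((1:ℝ)/8) :=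
      Real.rpow_le_rpow (by positivity) hx (by norm_num)
    have h2 : ((10:ℝ)^16) ^ ((1:ℝ)/8) = 100 := by
      rw [← Real.rpow_natCast 10 16, ← Real.rpow_mul (by norm_num)]
      norm_num
    linarith
  have hx18_0 : (0:ℝ) < x ^ ((1:ℝ)/8) := Real.rpow_pos_of_pos hx0 _
  have hlog_le : Real.log x ≤ 8 * x ^ ((1:ℝ)/8) := by
    have h1 : Real.log (x ^ ((1:ℝ)/8)) = (1/8) * Real.log x := Real.log_rpow hx0 _
    have h2 : Real.log (x ^ ((1:ℝ)/8)) ≤ x ^ ((1:ℝ)/8) - 1 :=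
      Real.log_le_sub_one_of_pos hx18_0
    nlinarith
  have hmul1 : z * x ^ ((1:ℝ)/8) = x ^ ((7:ℝ)/8) := by
    rw [hzdef, ← Real.rpow_add hx0]
    norm_num
  have hmul2 : x ^ ((7:ℝ)/8) * x ^ ((1:ℝ)/8) = x := by
    rw [← Real.rpow_add hx0]
    norm_num
  have hx78 : (100:ℝ) ≤ x ^ ((7:ℝ)/8) := by
    calc (100:ℝ) ≤ x ^ ((1:ℝ)/8) := hx18
      _ ≤ x ^ ((7:ℝ)/8) := Real.rpow_le_rpow_of_exponent_le hx1 (by norm_num)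
  have hx78_0 : (0:ℝ) < x ^ ((7:ℝ)/8) := Real.rpow_pos_of_pos hx0 _
  -- the key elementary estimate
  have key : (2*z+1) * Real.log x + 4.06 ≤ 0.2664 * x := by
    have hlog0 : 0 ≤ Real.log x := hlogx_pos.le
    have h1 : (2*z+1) * Real.log x ≤ 3*z * (8 * x ^ ((1:ℝ)/8)) := by
      apply mul_le_mul (by linarith) hlog_le hlog0 (by linarith)
    have h2 : 3*z * (8 * x ^ ((1:ℝ)/8)) = 24 * x ^ ((7:ℝ)/8) := by
      rw [← hmul1]; ring
    have h3 : 26.64 * x ^ ((7:ℝ)/8) ≤ 0.2664 * x := by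
      nlinarith [mul_nonneg hx78_0.le (by linarith : (0:ℝ) ≤ x ^ ((1:ℝ)/8) - 100), hmul2]
    have h4 : (4.06:ℝ) ≤ 2.64 * x ^ ((7:ℝ)/8) := by nlinarith [hx78]
    linarith
  -- log 4
  have hlog4 : (1.3862:ℝ) ≤ Real.log 4 := by
    have h2 : (0.6931471803:ℝ) < Real.log 2 := Real.log_two_gt_d9
    have : (4:ℝ) = 2 ^ (2:ℕ) := by norm_num
    rw [this, Real.log_pow]
    push_cast
    linarith
  have hlog4' : 0 ≤ Real.log 4 := by linarith
  -- Chebyshev bound, divided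
  have hcheb := cheb x (by linarith)
  set πx := ((primesLE x).card : ℝ) with hπx
  set πz := ((primesLE z).card : ℝ) with hπz
  have hπx_lb : ((x-2)/2) * Real.log 4 / Real.log x ≤ πx + 1 := by
    rw [div_le_iff₀ hlogx_pos]
    exact hcheb
  -- main multiplied inequality
  have hX : (0.32*x+2) * (4/3) + (2*z+1) * Real.log x ≤ ((x-2)/2) * Real.log 4 := by
    have hr1 : ((x-2)/2) * 1.3862 ≤ ((x-2)/2) * Real.log 4 :=
      mul_le_mul_of_nonneg_left hlog4 (by linarith)
    linarith [key, hr1]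
  -- divide by log x
  have hdiv : (0.32*x+2) * (4/3) / Real.log x + (2*z+1) ≤ ((x-2)/2) * Real.log 4 / Real.log x := by
    rw [div_add' _ _ _ hlogx_pos.ne']
    gcongr
  -- remaining card facts
  have hLcard : πz + ((primesIn z x).card : ℝ) = πx := by
    rw [hπz, hπx]
    exact_mod_cast card_primesIn z x hzx
  have hπz_le : πz ≤ z := card_primesLE_le z (by linarith)
  have h1div : 1 / Real.log z = 4/3 / Real.log x := by
    rw [hlogz, div_eq_div_iff (by positivity : (0:ℝ) < 3/4 * Real.log x).ne' hlogx_pos.ne']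
    ring
  have hcσ : c * (∏ p ∈ primesLE z, (1 - 1/(p:ℝ))) ≤ (0.32*x+2) * (4/3) / Real.log x := by
    calc c * (∏ p ∈ primesLE z, (1 - 1/(p:ℝ))) ≤ (0.32*x+2) * (1 / Real.log z) := by
          apply mul_le_mul hc hσ hσ0 (by linarith)
      _ = (0.32*x+2) * (4/3) / Real.log x := by rw [h1div]; ring
  linarith

/-- For all sufficiently large `x` and every integer `N`, with `y = ⌊0.08 x⌋`, there is a
residue `b` modulo `P(x) = ∏_{p ≤ x} p` with
`(S_x - b) ∩ [-y, y] = ∅` and `(S_x - N + b) ∩ [-y, y] = ∅`. -/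
theorem empty_double_shift :
    ∃ x₀ : ℝ, ∀ x : ℝ, x₀ ≤ x → ∀ N : ℤ,
      ∃ b : ℕ, b < Pprod x ∧
        (∀ n : ℤ, -(Nat.floor (0.08 * x) : ℤ) ≤ n → n ≤ (Nat.floor (0.08 * x) : ℤ) →
          n + (b : ℤ) ∉ Sset x) ∧
        (∀ n : ℤ, -(Nat.floor (0.08 * x) : ℤ) ≤ n → n ≤ (Nat.floor (0.08 * x) : ℤ) →
          n + (N - (b : ℤ)) ∉ Sset x) := by
  refine ⟨(10:ℝ)^16, ?_⟩
  intro x hx N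
  have hx1 : (1:ℝ) ≤ x := by
    have : (1:ℝ) ≤ (10:ℝ)^16 := by norm_num
    linarith
  have hx0 : (0:ℝ) ≤ x := by linarith
  set y := Nat.floor (0.08 * x) with hy
  set z := x ^ ((3:ℝ)/4) with hz
  set W : Finset ℤ := Finset.Icc (-(y:ℤ)) (y:ℤ) with hW
  set R : Finset (ℤ × Bool) := W ×ˢ (univ : Finset Bool) with hR
  -- card of R
  have hWcard : W.card = 2*y+1 := by
    rw [hW, Int.card_Icc]
    omega
  have hRcard : R.card = (2*y+1) * 2 := by
    rw [hR, Finset.card_product, hWcard, Finset.card_univ, Fintype.card_bool]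
  have hyx : (y:ℝ) ≤ 0.08 * x := Nat.floor_le (by positivity)
  have hcR : ((R.card : ℕ) : ℝ) ≤ 0.32 * x + 2 := by
    rw [hRcard]
    push_cast
    linarith
  -- prime sets
  have hsprimes : ∀ p ∈ primesLE z, p.Prime := fun p hp => (mem_primesLE.mp hp).1
  have hzx : z ≤ x := by
    calc z ≤ x ^ ((1:ℝ)) := Real.rpow_le_rpow_of_exponent_le hx1 (by norm_num)
      _ = x := Real.rpow_one x
  have hdisj : Disjoint (primesLE z) (primesIn z x) := by
    rw [Finset.disjoint_left]
    intro p hp hp'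
    have h1 : (p:ℝ) ≤ z := (mem_primesLE.mp hp).2
    have h2 : z < (p:ℝ) := (Finset.mem_filter.mp hp').2
    linarith
  have hsub : primesLE z ∪ primesIn z x ⊆ primesLE x := by
    intro p hp
    rcases Finset.mem_union.mp hp with h | h
    · have := mem_primesLE.mp h
      exact mem_primesLE.mpr ⟨this.1, le_trans this.2 hzx⟩
    · exact (Finset.mem_filter.mp h).1
  -- the key choice of residues
  obtain ⟨t, ht⟩ := exists_good_t N R (primesLE z) (primesIn z x) hsprimes hdisj
    (main_numeric x hx (R.card : ℝ) hcR (by positivity))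
  -- CRT
  obtain ⟨b₁, hb₁⟩ := crt_aux (primesLE x) (fun p hp => (mem_primesLE.mp hp).1) t
  set M : ℤ := (Pprod x : ℤ) with hM
  have hM0 : 0 < M := by
    rw [hM]
    have : 0 < Pprod x := by
      apply Finset.prod_pos
      intro p hp
      exact (mem_primesLE.mp hp).1.pos
    exact_mod_cast this
  set B : ℤ := b₁ % M with hB
  have hB0 : 0 ≤ B := Int.emod_nonneg b₁ hM0.ne'
  have hBlt : B < M := Int.emod_lt_of_pos b₁ hM0
  have hpM : ∀ p ∈ primesLE x, (p:ℤ) ∣ M := by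
    intro p hp
    rw [hM]
    exact_mod_cast Int.natCast_dvd_natCast.mpr (Finset.dvd_prod_of_mem _ hp)
  have hBcong : ∀ p ∈ primesLE x, (p:ℤ) ∣ B - t p := by
    intro p hp
    have h1 : (p:ℤ) ∣ B - b₁ := by
      have : B - b₁ = -(M * (b₁ / M)) := by
        rw [hB, Int.emod_def]
        ring
      rw [this]
      exact dvd_neg.mpr ((hpM p hp).mul_right _)
    have h2 := hb₁ p hp
    have : B - t p = (b₁ - t p) + (B - b₁) := by ring
    rw [this]
    exact dvd_add h2 h1
  refine ⟨B.toNat, ?_, ?_, ?_⟩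
  · have : (B.toNat : ℤ) < (Pprod x : ℤ) := by
      rw [Int.toNat_of_nonneg hB0]
      exact hBlt
    exact_mod_cast this
  · -- first condition
    intro n hn1 hn2 hmem
    have hrR : ((n, false) : ℤ × Bool) ∈ R := by
      rw [hR, Finset.mem_product]
      exact ⟨Finset.mem_Icc.mpr ⟨hn1, hn2⟩, Finset.mem_univ _⟩
    obtain ⟨p, hpU, hpd⟩ := ht _ hrR
    have hpx : p ∈ primesLE x := hsub hpU
    have hres : resid N (n, false) = -n := by simp [resid]
    rw [hres] at hpd
    have hdvd : (p:ℤ) ∣ n + (B.toNat : ℤ) := by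
      have h3 := dvd_sub (hBcong p hpx) hpd
      have : B - t p - (-n - t p) = n + B := by ring
      rw [this] at h3
      rw [Int.toNat_of_nonneg hB0]
      exact h3
    exact hmem p hpx hdvd
  · -- second condition
    intro n hn1 hn2 hmem
    have hrR : ((n, true) : ℤ × Bool) ∈ R := by
      rw [hR, Finset.mem_product]
      exact ⟨Finset.mem_Icc.mpr ⟨hn1, hn2⟩, Finset.mem_univ _⟩
    obtain ⟨p, hpU, hpd⟩ := ht _ hrR
    have hpx : p ∈ primesLE x := hsub hpU
    have hres : resid N (n, true) = n + N := by simp [resid]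
    rw [hres] at hpd
    have hdvd : (p:ℤ) ∣ n + (N - (B.toNat : ℤ)) := by
      have h3 := dvd_sub hpd (hBcong p hpx)
      have : (n + N - t p) - (B - t p) = n + (N - B) := by ring
      rw [this] at h3
      rw [Int.toNat_of_nonneg hB0]
      exact h3
    exact hmem p hpx hdvd
end
end

section
/- There exists x₀ such that for every real x ≥ x₀ and every integer N the following holds: setting z = x/2, y = ⌊0.08·x⌋ and P(z) = ∏_{p ≤ z} p, there exists a residue b′ modulo P(z) such that |(S_z − b′) ∩ [−y, y]| + |(S_z − N + b′) ∩ [−y, y]| ≤ 0.4·x/log x. -/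
/-!
Average over all residues `b` modulo `P = P(z)`. For a fixed `n`, exactly `φ(P)` residues `b`
make `n + b` (respectively `n + N - b`) coprime to `P`, so for an interval `I` some `b` gives
a total count of at most `2 |I| φ(P) / P = 2 |I| ∏_{p ≤ z} (1 - 1/p)`. By unique factorisation
`∏_{p ≤ z} (1 - 1/p)⁻¹ ≥ ∑_{n ≤ z} 1/n ≥ log z`, so the total is at most
`(0.32 x + 2) / log (x / 2)`, which is below `0.4 x / log x` once `x ≥ 3000`.
-/

open Finset
open scoped Classical

noncomputable section

lemma Pprod_pos (u : ℝ) : 0 < Pprod u :=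
  prod_pos fun _ hp => (mem_primesLE.mp hp).1.pos

lemma mem_Sset_iff_isUnit (z : ℝ) (m : ℤ) : m ∈ Sset z ↔ IsUnit (m : ZMod (Pprod z)) := by
  rw [ZMod.coe_int_isUnit_iff_isCoprime, Pprod, Nat.cast_prod, IsCoprime.prod_left_iff]
  refine forall₂_congr fun p hp => ?_
  exact (Prime.coprime_iff_not_dvd (Nat.prime_iff_prime_int.mp (mem_primesLE.mp hp).1)).symm

lemma totient_Pprod (z : ℝ) : ((Pprod z).totient : ℝ) = Pprod z * sigmaLE z := by
  have h := congrArg (Rat.cast : ℚ → ℝ) (Nat.totient_eq_mul_prod_factors (Pprod z))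
  rw [Pprod, Nat.primeFactors_prod fun p hp => (mem_primesLE.mp hp).1] at h
  push_cast at h
  simpa only [sigmaLE, Pprod, one_div, Nat.cast_prod] using h

theorem sum_card_filter_equiv {ι R : Type*} [Fintype R] (I : Finset ι) (e : ι → R ≃ R)
    (Q : R → Prop) [DecidablePred Q] : ∑ c : R, #{n ∈ I | Q (e n c)} = #I * #{r | Q r} := by
  simp_rw [card_filter]
  rw [sum_comm, ← smul_eq_mul, ← sum_const]
  exact sum_congr rfl fun n _ => (e n).sum_comp fun r => if Q r then 1 else 0

lemma ZMod.card_filter_isUnit (n : ℕ) [NeZero n] : #{r : ZMod n | IsUnit r} = n.totient := by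
  rw [← ZMod.card_units_eq_totient, ← card_univ, ← card_map ⟨Units.val, Units.val_injective⟩]
  congr 1
  ext r
  simp [IsUnit, eq_comm]

theorem ZMod.exists_card_filter_isUnit_shift_le (n : ℕ) [NeZero n] (I : Finset ℤ) (N : ℤ) :
    ∃ c : ZMod n,
      (#{k ∈ I | IsUnit (((k : ℤ) : ZMod n) + c)} +
        #{k ∈ I | IsUnit (((k : ℤ) : ZMod n) + N - c)}) * n ≤ 2 * #I * n.totient := by
  have hadd : ∑ c : ZMod n, #{k ∈ I | IsUnit (((k : ℤ) : ZMod n) + c)} = #I * n.totient :=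
    (sum_card_filter_equiv I (fun k => Equiv.addLeft (k : ZMod n)) IsUnit).trans
      (by rw [ZMod.card_filter_isUnit])
  have hsub : ∑ c : ZMod n, #{k ∈ I | IsUnit (((k : ℤ) : ZMod n) + N - c)} = #I * n.totient :=
    (sum_card_filter_equiv I (fun k => Equiv.subLeft ((k : ZMod n) + N)) IsUnit).trans
      (by rw [ZMod.card_filter_isUnit])
  obtain ⟨c, -, hc⟩ := exists_le_of_sum_le (univ_nonempty (α := ZMod n))
    (f := fun c => (#{k ∈ I | IsUnit (((k : ℤ) : ZMod n) + c)} +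
      #{k ∈ I | IsUnit (((k : ℤ) : ZMod n) + N - c)}) * n)
    (g := fun _ => 2 * #I * n.totient) <| le_of_eq <| by
      rw [← sum_mul, sum_add_distrib, hadd, hsub, sum_const, card_univ, ZMod.card, smul_eq_mul]
      ring
  exact ⟨c, hc⟩

theorem exists_shift_card_le (z : ℝ) (I : Finset ℤ) (N : ℤ) :
    ∃ b : ℕ, b < Pprod z ∧
      (#{n ∈ I | n + (b : ℤ) ∈ Sset z} : ℝ) + #{n ∈ I | n + (N - (b : ℤ)) ∈ Sset z}
        ≤ 2 * #I * sigmaLE z := by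
  have hP := Pprod_pos z
  have : NeZero (Pprod z) := ⟨hP.ne'⟩
  obtain ⟨c, hc⟩ := ZMod.exists_card_filter_isUnit_shift_le (Pprod z) I N
  refine ⟨c.val, c.val_lt, le_of_mul_le_mul_right ?_ (Nat.cast_pos.mpr hP)⟩
  simp only [mem_Sset_iff_isUnit, Int.cast_add, Int.cast_sub, Int.cast_natCast,
    ZMod.natCast_zmod_val, ← add_sub_assoc]
  calc _ ≤ (2 * #I * (Pprod z).totient : ℝ) := by exact_mod_cast hc
    _ = 2 * #I * sigmaLE z * Pprod z := by rw [totient_Pprod]; ring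

lemma Nat.prod_pow_factorization_eq_self_of_primeFactors_subset {n : ℕ} {s : Finset ℕ}
    (hn : n ≠ 0) (hs : n.primeFactors ⊆ s) : ∏ p ∈ s, p ^ n.factorization p = n := by
  refine (prod_subset hs fun p _ hp => ?_).symm.trans
    (Nat.prod_primeFactors_pow_factorization hn).symm
  rw [← Nat.support_factorization, Finsupp.notMem_support_iff] at hp
  rw [hp, pow_zero]

theorem sum_Icc_inv_le_prod_geom_sum {s : Finset ℕ} {N : ℕ}
    (hs : ∀ p, p.Prime → p ≤ N → p ∈ s) :
    ∑ n ∈ Icc 1 N, (n : ℝ)⁻¹ ≤ ∏ p ∈ s, ∑ k ∈ range (N + 1), ((p : ℝ)⁻¹) ^ k := by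
  have hprod : ∀ n ∈ Icc 1 N, ∏ p ∈ s, p ^ n.factorization p = n := fun n hn =>
    Nat.prod_pow_factorization_eq_self_of_primeFactors_subset (by grind)
      fun p hp => hs p (Nat.prime_of_mem_primeFactors hp)
        ((Nat.le_of_mem_primeFactors hp).trans (mem_Icc.mp hn).2)
  -- Expanding the product gives one term `∏ p⁻¹ ^ e p` for each exponent vector `e`, and
  -- distinct `n ≤ N` have distinct exponent vectors.
  let exponents : ℕ → ∀ p ∈ s, ℕ := fun n p _ => n.factorization p
  have hinv : ∀ n ∈ Icc 1 N,
      (n : ℝ)⁻¹ = ∏ p ∈ s.attach, ((p : ℝ)⁻¹) ^ exponents n p p.2 := by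
    intro n hn
    rw [prod_attach s fun p => ((p : ℝ)⁻¹) ^ n.factorization p]
    conv_lhs => rw [← hprod n hn]
    push_cast
    rw [← prod_inv_distrib]
    simp only [inv_pow]
  have hinj : Set.InjOn exponents (Icc 1 N) := fun n hn m hm h => by
    rw [← hprod n hn, ← hprod m hm]
    exact prod_congr rfl fun p hp => by rw [show n.factorization p = m.factorization p from
      congrFun (congrFun h p) hp]
  have hmaps : ∀ n ∈ Icc 1 N, exponents n ∈ s.pi fun _ => range (N + 1) := fun n hn =>
    mem_pi.mpr fun p _ => mem_range.mpr <| Nat.lt_succ_of_le <|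
      ((Nat.factorization_lt p (Nat.one_le_iff_ne_zero.mp (mem_Icc.mp hn).1)).le).trans
        (mem_Icc.mp hn).2
  rw [prod_sum, sum_congr rfl hinv,
    ← sum_image (f := fun g : ∀ p ∈ s, ℕ => ∏ p ∈ s.attach, ((p : ℝ)⁻¹) ^ g p p.2) hinj]
  exact sum_le_sum_of_subset_of_nonneg (image_subset_iff.mpr hmaps)
    fun _ _ _ => prod_nonneg fun _ _ => by positivity

theorem harmonic_le_prod_inv_one_sub_inv {s : Finset ℕ} {N : ℕ} (hprime : ∀ p ∈ s, p.Prime)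
    (hs : ∀ p, p.Prime → p ≤ N → p ∈ s) :
    (harmonic N : ℝ) ≤ ∏ p ∈ s, (1 - (p : ℝ)⁻¹)⁻¹ := by
  rw [harmonic_eq_sum_Icc]
  push_cast
  refine (sum_Icc_inv_le_prod_geom_sum hs).trans <|
    prod_le_prod (fun _ _ => sum_nonneg fun _ _ => by positivity) fun p hp => ?_
  have hp1 : (p : ℝ)⁻¹ < 1 := inv_lt_one_of_one_lt₀ (by exact_mod_cast (hprime p hp).one_lt)
  simpa using geom_sum_Ico_le_of_lt_one (m := 0) (n := N + 1) (by positivity) hp1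

lemma sigmaLE_pos (z : ℝ) : 0 < sigmaLE z := by
  refine prod_pos fun p hp => sub_pos.mpr ?_
  have hp := (mem_primesLE.mp hp).1
  rw [div_lt_one (by exact_mod_cast hp.pos)]
  exact_mod_cast hp.one_lt

theorem log_mul_sigmaLE_le_one {z : ℝ} (hz : 0 ≤ z) : Real.log z * sigmaLE z ≤ 1 := by
  have hprod : ∏ p ∈ primesLE z, (1 - (p : ℝ)⁻¹)⁻¹ = (sigmaLE z)⁻¹ := by
    rw [sigmaLE, ← prod_inv_distrib]
    simp only [one_div]
  have hlog : Real.log z ≤ (sigmaLE z)⁻¹ := by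
    refine (log_le_harmonic_floor z hz).trans (hprod ▸ harmonic_le_prod_inv_one_sub_inv
      (fun p hp => (mem_primesLE.mp hp).1) fun p hp hpz => mem_primesLE.mpr ⟨hp, ?_⟩)
    exact (Nat.le_floor_iff hz).mp hpz
  have hσ := sigmaLE_pos z
  calc Real.log z * sigmaLE z ≤ (sigmaLE z)⁻¹ * sigmaLE z := by gcongr
    _ = 1 := inv_mul_cancel₀ hσ.ne'

lemma eight_le_log {x : ℝ} (hx : 3000 ≤ x) : 8 ≤ Real.log x := by
  rw [Real.le_log_iff_exp_le (by linarith)]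
  calc Real.exp 8 = Real.exp 1 ^ 8 := by rw [← Real.exp_nat_mul]; norm_num
    _ ≤ 2.7182818286 ^ 8 := by
        gcongr
        exact Real.exp_one_lt_d9.le
    _ ≤ x := by norm_num; linarith

lemma mul_add_div_log_half_le {x : ℝ} (hx : 3000 ≤ x) :
    (0.32 * x + 2) / Real.log (x / 2) ≤ 0.4 * x / Real.log x := by
  have hL := eight_le_log hx
  have hl2 := Real.log_two_lt_d9
  rw [Real.log_div (by linarith) two_ne_zero, div_le_div_iff₀ (by linarith) (by linarith)]
  nlinarith [mul_nonneg (sub_nonneg.mpr hL) (by linarith : (0 : ℝ) ≤ 0.08 * x - 2)]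

theorem two_mul_card_Icc_mul_sigmaLE_le {x : ℝ} (hx : 3000 ≤ x) :
    2 * #(Icc (-(⌊0.08 * x⌋₊ : ℤ)) ⌊0.08 * x⌋₊) * sigmaLE (x / 2) ≤ 0.4 * x / Real.log x := by
  have hcard : (#(Icc (-(⌊0.08 * x⌋₊ : ℤ)) ⌊0.08 * x⌋₊) : ℝ) ≤ 0.16 * x + 1 := by
    have hy : (⌊0.08 * x⌋₊ : ℝ) ≤ 0.08 * x := Nat.floor_le (by linarith)
    have h : #(Icc (-(⌊0.08 * x⌋₊ : ℤ)) ⌊0.08 * x⌋₊) = 2 * ⌊0.08 * x⌋₊ + 1 := by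
      rw [Int.card_Icc]
      omega
    rw [h]
    push_cast
    linarith
  have hlog : 0 < Real.log (x / 2) := Real.log_pos (by linarith)
  have hσ : sigmaLE (x / 2) ≤ 1 / Real.log (x / 2) := by
    rw [le_div_iff₀ hlog, mul_comm]
    exact log_mul_sigmaLE_le_one (by linarith)
  calc 2 * #(Icc (-(⌊0.08 * x⌋₊ : ℤ)) ⌊0.08 * x⌋₊) * sigmaLE (x / 2)
      ≤ 2 * (0.16 * x + 1) * (1 / Real.log (x / 2)) :=
        mul_le_mul (by linarith) hσ (sigmaLE_pos _).le (by linarith)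
    _ = (0.32 * x + 2) / Real.log (x / 2) := by ring
    _ ≤ 0.4 * x / Real.log x := mul_add_div_log_half_le hx

/-- For all sufficiently large `x` and every integer `N`, with `z = x/2` and
`y = ⌊0.08 x⌋`, there is a residue `b'` modulo `P(z) = ∏_{p ≤ z} p` with
`|(S_z - b') ∩ [-y, y]| + |(S_z - N + b') ∩ [-y, y]| ≤ 0.4 x / log x`. -/
theorem small_double_shift :
    ∃ x₀ : ℝ, ∀ x : ℝ, x₀ ≤ x → ∀ N : ℤ,
      ∃ b : ℕ, b < Pprod (x / 2) ∧
        (((Finset.Icc (-(Nat.floor (0.08 * x) : ℤ)) (Nat.floor (0.08 * x) : ℤ)).filter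
            fun n => n + (b : ℤ) ∈ Sset (x / 2)).card : ℝ)
          + (((Finset.Icc (-(Nat.floor (0.08 * x) : ℤ)) (Nat.floor (0.08 * x) : ℤ)).filter
            fun n => n + (N - (b : ℤ)) ∈ Sset (x / 2)).card : ℝ)
          ≤ 0.4 * x / Real.log x := by
  refine ⟨3000, fun x hx N => ?_⟩
  obtain ⟨b, hb, hcount⟩ :=
    exists_shift_card_le (x / 2) (Icc (-(⌊0.08 * x⌋₊ : ℤ)) ⌊0.08 * x⌋₊) N
  exact ⟨b, hb, hcount.trans (two_mul_card_Icc_mul_sigmaLE_le hx)⟩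
end
end
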